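/- If X and Y are jointly Gaussian standard normal random variables with correlation ρ = E[XY], then E[Hₙ(X) Hₘ(Y)] = δ_{n,m} · n! · ρⁿ, where Hₙ denotes the nth probabilists' Hermite polynomial. -/

import Mathlib

/-!
Write `Y = ρ X + W` with `W = Y - ρ X`. The pair `(X, W)` is Gaussian and uncorrelated, so `W` is
independent of `X`, with law `N(0, 1 - ρ²)`. Gaussian integration by parts,
`E[(Z - m) p(Z)] = v E[p'(Z)]` for `Z ~ N(m, v)`, combined with `Hₙ₊₁ = x Hₙ - Hₙ'` and
`Hₙ₊₁' = (n + 1) Hₙ`, yields both the orthogonality `E[Hₙ(X) Hₘ(X)] = δₙₘ n!` and Mehler's relation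
`E[Hₘ(ρ x + W)] = ρᵐ Hₘ(x)`. Integrating out `W` first (Fubini for the product law of `(X, W)`)
turns `E[Hₙ(X) Hₘ(Y)]` into `ρᵐ E[Hₙ(X) Hₘ(X)]`.
-/

open MeasureTheory ProbabilityTheory Polynomial Real
open scoped NNReal

theorem Polynomial.derivative_hermite_succ (n : ℕ) :
    derivative (hermite (n + 1)) = (n + 1 : ℤ[X]) * hermite n := by
  induction n with
  | zero => simp
  | succ n ih =>
    rw [hermite_succ (n + 1), derivative_sub, derivative_mul, derivative_X, one_mul, ih,
      derivative_mul, hermite_succ n]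
    simp only [derivative_add, derivative_natCast, derivative_one, add_zero, zero_mul, zero_add]
    push_cast
    ring

section HermiteMap

variable {R : Type*} [CommRing R]

theorem map_hermite_succ (n : ℕ) :
    (hermite (n + 1)).map (algebraMap ℤ R) =
      X * (hermite n).map (algebraMap ℤ R) - derivative ((hermite n).map (algebraMap ℤ R)) := by
  rw [hermite_succ, Polynomial.map_sub, Polynomial.map_mul, map_X, derivative_map]

theorem derivative_map_hermite_succ (n : ℕ) :
    derivative ((hermite (n + 1)).map (algebraMap ℤ R)) =
      ((n : R) + 1) • (hermite n).map (algebraMap ℤ R) := by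
  rw [derivative_map, derivative_hermite_succ, Polynomial.map_mul, smul_eq_C_mul]
  simp

theorem map_hermite_succ_succ (n : ℕ) :
    (hermite (n + 2)).map (algebraMap ℤ R) =
      X * (hermite (n + 1)).map (algebraMap ℤ R) -
        ((n : R) + 1) • (hermite n).map (algebraMap ℤ R) := by
  rw [map_hermite_succ (n + 1), derivative_map_hermite_succ]

end HermiteMap

section GaussianIntegrationByParts

variable {v : ℝ≥0}

theorem integrable_eval_gaussianReal (p : ℝ[X]) (m : ℝ) :
    Integrable (fun x => p.eval x) (gaussianReal m v) := by
  simp_rw [eval_eq_sum_range]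
  refine integrable_finsetSum _ fun i _ => Integrable.const_mul ?_ _
  have h := (memLp_id_gaussianReal (μ := m) (v := v) i).integrable_norm_pow'
  exact h.mono' (by fun_prop) (ae_of_all _ fun x => by simp [norm_pow])

theorem memLp_two_eval_gaussianReal (p : ℝ[X]) (m : ℝ) :
    MemLp (fun x => p.eval x) 2 (gaussianReal m v) := by
  have h := integrable_eval_gaussianReal (v := v) (p ^ 2) m
  simp only [eval_pow] at h
  exact (memLp_two_iff_integrable_sq p.continuous.aestronglyMeasurable).mpr h

theorem integrable_eval_mul_gaussianPDFReal (p : ℝ[X]) (m : ℝ) :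
    Integrable (fun x => p.eval x * gaussianPDFReal m v x) := by
  rcases eq_or_ne v 0 with rfl | hv
  · simp
  have h := integrable_eval_gaussianReal (v := v) p m
  rw [gaussianReal_of_var_ne_zero m hv, integrable_withDensity_iff (measurable_gaussianPDF m v)
    (ae_of_all _ fun _ => gaussianPDF_lt_top)] at h
  simpa only [toReal_gaussianPDF] using h

theorem hasDerivAt_gaussianPDFReal (m x : ℝ) :
    HasDerivAt (gaussianPDFReal m v) (-((x - m) / v) * gaussianPDFReal m v x) x := by
  have h : HasDerivAt (fun x : ℝ => -(x - m) ^ 2 / (2 * v)) (-((x - m) / v)) x :=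
    (((hasDerivAt_id x).sub_const m).pow 2).neg.div_const _ |>.congr_deriv (by rw [id_eq]; ring)
  exact (h.exp.const_mul _).congr_deriv (by rw [gaussianPDFReal]; ring)

theorem integral_sub_mul_eval_gaussianReal (p : ℝ[X]) (m : ℝ) :
    ∫ x, (x - m) * p.eval x ∂gaussianReal m v =
      v * ∫ x, (derivative p).eval x ∂gaussianReal m v := by
  rcases eq_or_ne v 0 with rfl | hv
  · simp [gaussianReal_zero_var]
  set φ := gaussianPDFReal m v
  have ibp : ∫ x, p.eval x * (-((x - m) / v) * φ x) = -∫ x, (derivative p).eval x * φ x :=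
    integral_mul_deriv_eq_deriv_mul_of_integrable (fun x _ => p.hasDerivAt x)
      (fun x _ => hasDerivAt_gaussianPDFReal m x)
      (((integrable_eval_mul_gaussianPDFReal ((X - C m) * p) m).const_mul (-(v : ℝ)⁻¹)).congr
        (ae_of_all _ fun x => by
          simp only [Pi.mul_apply, eval_mul, eval_sub, eval_X, eval_C, φ]
          ring))
      (integrable_eval_mul_gaussianPDFReal _ m) (integrable_eval_mul_gaussianPDFReal p m)
  simp only [integral_gaussianReal_eq_integral_smul hv, smul_eq_mul]
  calc ∫ x, φ x * ((x - m) * p.eval x) = -v * ∫ x, p.eval x * (-((x - m) / v) * φ x) := by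
        rw [← integral_const_mul]; congr 1 with x; field_simp
    _ = v * ∫ x, φ x * (derivative p).eval x := by
        rw [ibp]; simp_rw [mul_comm (φ _)]; ring

noncomputable def gaussianPolyIntegral (v : ℝ≥0) : ℝ[X] →ₗ[ℝ] ℝ where
  toFun p := ∫ x, p.eval x ∂gaussianReal 0 v
  map_add' p q := by
    simp only [eval_add]
    exact integral_add (integrable_eval_gaussianReal p 0) (integrable_eval_gaussianReal q 0)
  map_smul' c p := by simp [integral_const_mul]

theorem gaussianPolyIntegral_apply (p : ℝ[X]) :
    gaussianPolyIntegral v p = ∫ x, p.eval x ∂gaussianReal 0 v := rfl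

theorem gaussianPolyIntegral_C (c : ℝ) : gaussianPolyIntegral v (C c) = c := by
  simp [gaussianPolyIntegral_apply]

theorem gaussianPolyIntegral_one : gaussianPolyIntegral v 1 = 1 := by
  simpa using gaussianPolyIntegral_C (v := v) 1

theorem gaussianPolyIntegral_X_mul (p : ℝ[X]) :
    gaussianPolyIntegral v (X * p) = v * gaussianPolyIntegral v (derivative p) := by
  simpa [gaussianPolyIntegral_apply] using integral_sub_mul_eval_gaussianReal p 0

theorem gaussianPolyIntegral_X : gaussianPolyIntegral v X = 0 := by
  simpa using gaussianPolyIntegral_X_mul (v := v) 1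

end GaussianIntegrationByParts

section HermiteGaussian

local notation "𝓗" n:max => Polynomial.map (algebraMap ℤ ℝ) (hermite n)

theorem gaussianPolyIntegral_mul_hermite_succ (p : ℝ[X]) (n : ℕ) :
    gaussianPolyIntegral 1 (p * 𝓗 (n + 1)) = gaussianPolyIntegral 1 (derivative p * 𝓗 n) := by
  have h := gaussianPolyIntegral_X_mul (v := 1) (p * 𝓗 n)
  rw [derivative_mul, map_add, NNReal.coe_one, one_mul] at h
  rw [map_hermite_succ, mul_sub, map_sub, mul_left_comm, h]
  ring

open Nat in
theorem gaussianPolyIntegral_hermite_mul_hermite (n m : ℕ) :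
    gaussianPolyIntegral 1 (𝓗 n * 𝓗 m) = if n = m then (n ! : ℝ) else 0 := by
  induction m generalizing n with
  | zero =>
    cases n with
    | zero => simp [gaussianPolyIntegral_one]
    | succ n => rw [mul_comm, gaussianPolyIntegral_mul_hermite_succ]; simp
  | succ m ih =>
    rw [gaussianPolyIntegral_mul_hermite_succ]
    cases n with
    | zero => simp
    | succ n =>
      rw [derivative_map_hermite_succ, smul_mul_assoc, map_smul, ih, smul_eq_mul]
      split_ifs with h <;> simp_all [factorial_succ]

theorem gaussianPolyIntegral_hermite_comp {v : ℝ≥0} {a : ℝ} (hv : (v : ℝ) = 1 - a ^ 2) (x : ℝ)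
    (n : ℕ) : gaussianPolyIntegral v ((𝓗 n).comp (C (a * x) + X)) = a ^ n * (𝓗 n).eval x := by
  induction n using Nat.twoStepInduction with
  | zero => simp [gaussianPolyIntegral_one]
  | one =>
    rw [hermite_one, map_X, X_comp, map_add, gaussianPolyIntegral_C, gaussianPolyIntegral_X,
      add_zero, pow_one, eval_X]
  | more n ih₀ ih₁ =>
    have hder : derivative ((𝓗 (n + 1)).comp (C (a * x) + X)) =
        ((n : ℝ) + 1) • (𝓗 n).comp (C (a * x) + X) := by
      rw [derivative_comp, derivative_add, derivative_C, derivative_X, zero_add, one_mul,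
        derivative_map_hermite_succ, smul_comp]
    rw [map_hermite_succ_succ, sub_comp, mul_comp, X_comp, smul_comp, add_mul, map_sub, map_add,
      ← smul_eq_C_mul, map_smul, map_smul, gaussianPolyIntegral_X_mul, hder, map_smul, ih₀, ih₁]
    simp only [smul_eq_mul, eval_sub, eval_mul, eval_X, eval_smul, hv]
    ring

variable {Ω : Type*} [MeasurableSpace Ω] {μ : Measure Ω} {X W : Ω → ℝ}

theorem hasLaw_mul_add_of_indepFun {a : ℝ} {v : ℝ≥0} (hv : (v : ℝ) = 1 - a ^ 2)
    (hX : HasLaw X (gaussianReal 0 1) μ) (hW : HasLaw W (gaussianReal 0 v) μ)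
    (hXW : IndepFun X W μ) : HasLaw (fun ω => a * X ω + W ω) (gaussianReal 0 1) μ := by
  have haX := gaussianReal_const_mul hX a
  refine ⟨haX.aemeasurable.add hW.aemeasurable, ?_⟩
  convert gaussianReal_add_gaussianReal_of_indepFun
    (hXW.comp (measurable_const_mul a) measurable_id) haX.map_eq hW.map_eq using 2
  congr 1
  · simp
  · exact NNReal.eq (by simp [hv])

open Nat in
theorem integral_aeval_hermite_mul_aeval_hermite_add {a : ℝ} {v : ℝ≥0}
    (hv : (v : ℝ) = 1 - a ^ 2) (hX : HasLaw X (gaussianReal 0 1) μ)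
    (hW : HasLaw W (gaussianReal 0 v) μ) (hXW : IndepFun X W μ) (n m : ℕ) :
    ∫ ω, aeval (X ω) (hermite n) * aeval (a * X ω + W ω) (hermite m) ∂μ =
      if n = m then n ! * a ^ n else 0 := by
  have := hX.isProbabilityMeasure
  have hY := hasLaw_mul_add_of_indepFun hv hX hW hXW
  have hlaw := (indepFun_iff_hasLaw_prodMk_prod hX hW).mp hXW
  set F : ℝ × ℝ → ℝ := fun z => (𝓗 n).eval z.1 * (𝓗 m).eval (a * z.1 + z.2)
  have hF : Integrable F ((gaussianReal 0 1).prod (gaussianReal 0 v)) := by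
    rw [← hlaw.map_eq, integrable_map_measure (by fun_prop) hlaw.aemeasurable]
    have hHX := (hX.map_eq ▸ memLp_two_eval_gaussianReal (𝓗 n) 0).comp_of_map hX.aemeasurable
    have hHY := (hY.map_eq ▸ memLp_two_eval_gaussianReal (𝓗 m) 0).comp_of_map hY.aemeasurable
    exact hHX.integrable_mul hHY
  calc ∫ ω, aeval (X ω) (hermite n) * aeval (a * X ω + W ω) (hermite m) ∂μ
      = ∫ z, F z ∂((gaussianReal 0 1).prod (gaussianReal 0 v)) := by
        simp_rw [← eval_map_algebraMap]
        exact hlaw.integral_comp hF.aestronglyMeasurable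
    _ = ∫ x, ∫ w, F (x, w) ∂gaussianReal 0 v ∂gaussianReal 0 1 := integral_prod F hF
    _ = ∫ x, (𝓗 n).eval x * (a ^ m * (𝓗 m).eval x) ∂gaussianReal 0 1 := by
        congr 1 with x
        simp only [F]
        rw [integral_const_mul, ← gaussianPolyIntegral_hermite_comp hv x m,
          gaussianPolyIntegral_apply]
        simp [eval_comp, add_comm]
    _ = a ^ m * gaussianPolyIntegral 1 (𝓗 n * 𝓗 m) := by
        rw [gaussianPolyIntegral_apply, ← integral_const_mul]
        simp only [eval_mul]
        congr 1 with x
        ring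
    _ = if n = m then n ! * a ^ n else 0 := by
        rw [gaussianPolyIntegral_hermite_mul_hermite]
        split_ifs with h
        · rw [h, mul_comm]
        · rw [mul_zero]

end HermiteGaussian

section GaussianPair

variable {Ω : Type*} [MeasurableSpace Ω] {μ : Measure Ω} {X Y : Ω → ℝ}

theorem hasGaussianLaw_prodMk_of_map_eq_gaussianReal
    (h : ∀ s t : ℝ, ∃ m v, μ.map (fun ω => s * X ω + t * Y ω) = gaussianReal m v) :
    HasGaussianLaw (fun ω => (X ω, Y ω)) μ := by
  have hae : ∀ s t : ℝ, AEMeasurable (fun ω => s * X ω + t * Y ω) μ := fun s t => by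
    obtain ⟨m, v, hst⟩ := h s t
    exact AEMeasurable.of_map_ne_zero (hst ▸ IsProbabilityMeasure.ne_zero _)
  have hX : AEMeasurable X μ := by simpa using hae 1 0
  have hY : AEMeasurable Y μ := by simpa using hae 0 1
  refine ⟨isGaussian_of_map_eq_gaussianReal fun L => ?_⟩
  obtain ⟨m, v, hL⟩ := h (L (1, 0)) (L (0, 1))
  refine ⟨m, v, ?_⟩
  rw [AEMeasurable.map_map_of_aemeasurable L.continuous.aemeasurable (hX.prodMk hY), ← hL]
  congr 1 with ω
  have hxy : (X ω, Y ω) = X ω • ((1 : ℝ), (0 : ℝ)) + Y ω • ((0 : ℝ), (1 : ℝ)) := by simp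
  rw [Function.comp_apply, hxy, map_add, map_smul, map_smul, smul_eq_mul, smul_eq_mul,
    mul_comm, mul_comm (Y ω)]

theorem ProbabilityTheory.HasGaussianLaw.indepFun_sub_covariance_div_mul
    (hXY : HasGaussianLaw (fun ω => (X ω, Y ω)) μ) (hX : Var[X; μ] ≠ 0) :
    IndepFun X (fun ω => Y ω - cov[X, Y; μ] / Var[X; μ] * X ω) μ := by
  have := hXY.isProbabilityMeasure
  have hX2 := hXY.fst.memLp_two
  have hY2 := hXY.snd.memLp_two
  have hXW : HasGaussianLaw (fun ω => (X ω, Y ω - cov[X, Y; μ] / Var[X; μ] * X ω)) μ :=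
    hXY.map_fun ((ContinuousLinearMap.fst ℝ ℝ ℝ).prod
      (ContinuousLinearMap.snd ℝ ℝ ℝ - (cov[X, Y; μ] / Var[X; μ]) • ContinuousLinearMap.fst ℝ ℝ ℝ))
  refine hXW.indepFun_of_covariance_eq_zero ?_
  rw [covariance_fun_sub_right hX2 hY2 (hX2.const_mul _), covariance_const_mul_right,
    covariance_self hXY.fst.aemeasurable, div_mul_cancel₀ _ hX, sub_self]

end GaussianPair

/-- If `X` and `Y` are jointly Gaussian standard normal random variables with
correlation `ρ = E[XY]` (jointly Gaussian meaning that every linear combination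
`sX + tY` is Gaussian, with the variance `s² + 2stρ + t²` dictated by unit
variances and covariance `ρ`), then `E[Hₙ(X) Hₘ(Y)] = δ_{n,m} · n! · ρⁿ`,
where `Hₙ` is the `n`th probabilists' Hermite polynomial. -/
theorem hermite_orthogonality_gaussian
    {Ω : Type*} [MeasurableSpace Ω] (μ : Measure Ω) [IsProbabilityMeasure μ]
    (X Y : Ω → ℝ) (ρ : ℝ)
    (hGauss : ∀ s t : ℝ, Measure.map (fun ω => s * X ω + t * Y ω) μ =
      gaussianReal 0 (Real.toNNReal (s ^ 2 + 2 * s * t * ρ + t ^ 2)))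
    (hρ : ρ = ∫ ω, X ω * Y ω ∂μ) (n m : ℕ) :
    ∫ ω, (aeval (X ω) (hermite n)) * (aeval (Y ω) (hermite m)) ∂μ =
      if n = m then (n.factorial : ℝ) * ρ ^ n else 0 := by
  have hXY := hasGaussianLaw_prodMk_of_map_eq_gaussianReal fun s t => ⟨0, _, hGauss s t⟩
  have hX : HasLaw X (gaussianReal 0 1) μ := ⟨hXY.fst.aemeasurable, by simpa using hGauss 1 0⟩
  have hY : HasLaw Y (gaussianReal 0 1) μ := ⟨hXY.snd.aemeasurable, by simpa using hGauss 0 1⟩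
  have hX2 := hXY.fst.memLp_two
  have hY2 := hXY.snd.memLp_two
  have hVarX : Var[X; μ] = 1 := by simp [hX.variance_eq]
  have hcov : cov[X, Y; μ] = ρ := by simp [covariance_eq_sub hX2 hY2, hX.integral_eq, hρ]
  set W := fun ω => Y ω - ρ * X ω
  have hXW : IndepFun X W μ := by
    simpa only [hcov, hVarX, div_one] using
      hXY.indepFun_sub_covariance_div_mul (hVarX ▸ one_ne_zero)
  have hW : HasLaw W (gaussianReal 0 (1 - ρ ^ 2).toNNReal) μ := by
    refine ⟨hY.aemeasurable.sub (hX.aemeasurable.const_mul ρ), ?_⟩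
    convert hGauss (-ρ) 1 using 2
    · ext ω
      simp only [W]
      ring
    · congr 1
      ring
  have hVarW : Var[W; μ] = 1 - ρ ^ 2 := by
    rw [variance_fun_sub hY2 (hX2.const_mul ρ), covariance_const_mul_right, covariance_comm, hcov,
      variance_const_mul, hVarX, hY.variance_eq, variance_id_gaussianReal, NNReal.coe_one]
    ring
  convert integral_aeval_hermite_mul_aeval_hermite_add
    (Real.coe_toNNReal _ (hVarW ▸ variance_nonneg W μ)) hX hW hXW n m using 4 with ω
  simp only [W, add_sub_cancel]
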